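/- arXiv:math/0604183 — 2 statements merged into one kernel-verified Lean document; each statement's English description precedes it below -/
import Mathlib

section
/- Let k be a field, L a one-dimensional k-vector space, V a finite-dimensional k-vector space, and let I ⊆ H ⊆ V be subspaces with dim I = 1 and dim H = dim V − 1. Suppose given a nondegenerate alternating bilinear map c : (H/I) × (H/I) → L and a linear isomorphism f : V/I → Hom(H, L) such that the composition H/I ⊆ V/I → Hom(H, L) equals the composition of the adjoint c# : H/I → Hom(H/I, L) with the pullback map Hom(H/I, L) → Hom(H, L) along the quotient H → H/I (so that f is an isomorphism of the short exact sequence 0 → H/I → V/I → V/H → 0 onto 0 → Hom(H/I, L) → Hom(H, L) → Hom(I, L) → 0). Then there exists a unique alternating bilinear map b : V × V → L such that (a) b(h, h′) = c([h], [h′]) for all h, h′ ∈ H, and (b) for every v ∈ V, the linear functional b(−, v)|_H ∈ Hom(H, L) equals f([v]), where [v] denotes the class of v in V/I. Moreover this b is nondegenerate and satisfies I^⊥ = H. -/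
/-!
An alternating form is determined by its values on `H × V` when `H` is a hyperplane: the
difference of two such forms `B` satisfies `B x = 0` for every `x ∉ H`, since `B x` vanishes on
`H` and at `x`. For existence, pick a retraction `π : V → H` and put
`b v v' = f [v'] (π v) - f [v - π v] (π v')`, which is alternating because `c` is.
Writing `g v = f [v]`, surjectivity of `f` means that no nonzero `h ∈ H` is killed by all the
`g v`, i.e. `b h ≠ 0`. The radical of `b` lies in `ker g = I ⊆ H`, hence is zero. For `i ∈ I`
the functional `b i` vanishes on `H`; if it also vanished at some `w ∉ H` it would vanish on
`V`, so `I^⊥ = H`.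
-/

open LinearMap Module

section Coatom

variable {R V M : Type*} [Ring R] [AddCommGroup V] [Module R V] [AddCommGroup M] [Module R M]

theorem Submodule.isCoatom_of_finrank_add_one_eq {K : Type*} [DivisionRing K] [Module K V]
    [FiniteDimensional K V] {H : Submodule K V} (hH : finrank K H + 1 = finrank K V) :
    IsCoatom H := by
  refine ⟨fun hH_top => ?_, fun U hU => Submodule.eq_top_of_finrank_eq ?_⟩
  · subst hH_top
    simp [finrank_top] at hH
  · have := Submodule.finrank_lt_finrank_of_lt hU
    have := U.finrank_le
    omega

theorem LinearMap.eq_zero_of_le_ker_of_notMem {H : Submodule R V} (hH : IsCoatom H)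
    {φ : V →ₗ[R] M} (hφ : H ≤ ker φ) {w : V} (hw : w ∉ H) (hφw : φ w = 0) : φ = 0 :=
  ker_eq_top.mp <| hH.2 _ <| SetLike.lt_iff_le_and_exists.mpr ⟨hφ, w, hφw, hw⟩

end Coatom

section Alternating

variable {k V L : Type*} [Field k] [AddCommGroup V] [Module k V] [AddCommGroup L] [Module k L]

theorem LinearMap.flip_injective_of_surjective [Nontrivial L] {H : Type*} [AddCommGroup H]
    [Module k H] {g : V →ₗ[k] H →ₗ[k] L} (hg : Function.Surjective g) :
    Function.Injective g.flip := by
  rw [← ker_eq_bot, ker_eq_bot']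
  intro x hx
  rw [← Module.forall_dual_apply_eq_zero_iff k x]
  intro φ
  obtain ⟨l, hl⟩ := exists_ne (0 : L)
  obtain ⟨v, hv⟩ := hg (φ.smulRight l)
  have : g v x = 0 := by simpa using congr($hx v)
  rw [hv, smulRight_apply] at this
  exact (smul_eq_zero.mp this).resolve_right hl

variable {H : Submodule k V}

theorem exists_isAlt_extension (g : V →ₗ[k] H →ₗ[k] L) (hg : ∀ h : H, g h h = 0) :
    ∃ b : V →ₗ[k] V →ₗ[k] L, b.IsAlt ∧ ∀ (h : H) (v : V), b h v = g v h := by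
  obtain ⟨π, hπ⟩ := H.subtype.exists_leftInverse_of_injective H.ker_subtype
  have hπ_apply (h : H) : π h = h := congr($hπ h)
  exact ⟨g.flip ∘ₗ π - (g ∘ₗ (LinearMap.id - H.subtype ∘ₗ π)).compl₂ π,
    fun v => by simp [hg], fun h v => by simp [hπ_apply]⟩

theorem LinearMap.IsAlt.eq_of_isCoatom {B B' : V →ₗ[k] V →ₗ[k] L} (hB : B.IsAlt)
    (hB' : B'.IsAlt) (hH : IsCoatom H) (hBH : ∀ h ∈ H, B h = B' h) : B = B' := by
  ext x : 1
  by_cases hx : x ∈ H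
  · exact hBH x hx
  · rw [← sub_eq_zero, ← LinearMap.sub_apply]
    refine eq_zero_of_le_ker_of_notMem hH (fun h hh => ?_) hx (by simp [hB x, hB' x])
    rw [mem_ker, sub_apply, sub_apply, ← hB.neg, ← hB'.neg, hBH h hh, sub_self]

variable [Nontrivial L] {B : V →ₗ[k] V →ₗ[k] L} {g : V →ₗ[k] H →ₗ[k] L}
  (hBg : ∀ (h : H) (v : V), B h v = g v h) (hg : Function.Surjective g)
include hBg hg

theorem eq_zero_of_mem_of_apply_eq_zero {h : V} (hh : h ∈ H) (hBh : B h = 0) : h = 0 := by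
  have := (injective_iff_map_eq_zero _).mp (flip_injective_of_surjective hg) ⟨h, hh⟩
    (LinearMap.ext fun v => by simpa [hBh] using (hBg ⟨h, hh⟩ v).symm)
  simpa using this

theorem LinearMap.IsAlt.flip_injective_of_ker_le (hB : B.IsAlt) (hker : ker g ≤ H) :
    Function.Injective B.flip := by
  rw [← ker_eq_bot, ker_eq_bot']
  intro v hv
  have hvH : v ∈ H := hker <| LinearMap.ext fun h => by
    rw [← hBg, ← flip_apply, hv, zero_apply, zero_apply]
  refine eq_zero_of_mem_of_apply_eq_zero hBg hg hvH (LinearMap.ext fun w => ?_)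
  rw [← hB.neg, ← flip_apply, hv, zero_apply, neg_zero]

theorem LinearMap.IsAlt.mem_of_apply_eq_zero (hB : B.IsAlt) (hH : IsCoatom H) {i : V}
    (hi : i ∈ H) (hi₀ : i ≠ 0) (hgi : ∀ h : H, g h ⟨i, hi⟩ = 0) {w : V}
    (hw : B w i = 0) : w ∈ H := by
  by_contra hwH
  refine hi₀ (eq_zero_of_mem_of_apply_eq_zero hBg hg hi
    (eq_zero_of_le_ker_of_notMem hH (fun h hh => ?_) hwH ?_))
  · rw [mem_ker, hBg ⟨i, hi⟩, hgi ⟨h, hh⟩]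
  · rw [← hB.neg, hw, neg_zero]

end Alternating

theorem symplectic_extension_unique_general
    (k : Type*) [Field k]
    (L : Type*) [AddCommGroup L] [Module k L] (hL : Module.finrank k L = 1)
    (V : Type*) [AddCommGroup V] [Module k V] [FiniteDimensional k V]
    (I H : Submodule k V) (hIH : I ≤ H)
    (hI : Module.finrank k I = 1)
    (hH : Module.finrank k H + 1 = Module.finrank k V)
    (c : (H ⧸ I.comap H.subtype) →ₗ[k] (H ⧸ I.comap H.subtype) →ₗ[k] L)
    (hc_alt : ∀ z, c z z = 0)
    (f : (V ⧸ I) →ₗ[k] (H →ₗ[k] L)) (hf : Function.Bijective f)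
    (hcompat : ∀ h h' : H,
      f (Submodule.Quotient.mk (h : V)) h'
        = c (Submodule.Quotient.mk h') (Submodule.Quotient.mk h)) :
    ∃ b : V →ₗ[k] V →ₗ[k] L,
      ((∀ v : V, b v v = 0) ∧
       (∀ h h' : H, b (h : V) (h' : V)
          = c (Submodule.Quotient.mk h) (Submodule.Quotient.mk h')) ∧
       (∀ (v : V) (h : H), b (h : V) v = f (Submodule.Quotient.mk v) h)) ∧
      Function.Bijective b.flip ∧
      (∀ w : V, w ∈ H ↔ ∀ v ∈ I, b w v = 0) ∧
      (∀ b' : V →ₗ[k] V →ₗ[k] L,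
        ((∀ v : V, b' v v = 0) ∧
         (∀ h h' : H, b' (h : V) (h' : V)
            = c (Submodule.Quotient.mk h) (Submodule.Quotient.mk h')) ∧
         (∀ (v : V) (h : H), b' (h : V) v = f (Submodule.Quotient.mk v) h)) →
        b' = b) := by
  have : FiniteDimensional k L := Module.finite_of_finrank_eq_succ hL
  have : Nontrivial L := Module.nontrivial_of_finrank_eq_succ hL
  have : Nontrivial I := Module.nontrivial_of_finrank_eq_succ hI
  have hH_coatom : IsCoatom H := Submodule.isCoatom_of_finrank_add_one_eq hH
  have hg_surj : Function.Surjective (f ∘ₗ I.mkQ) := hf.2.comp I.mkQ_surjective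
  have hg_ker : ker (f ∘ₗ I.mkQ) ≤ H := by
    rwa [ker_comp, ker_eq_bot.mpr hf.1, Submodule.comap_bot, Submodule.ker_mkQ]
  obtain ⟨b, hb_alt, hb_left⟩ := exists_isAlt_extension (f ∘ₗ I.mkQ)
    fun h => by simp [hcompat, hc_alt]
  replace hb_left : ∀ (h : H) (v : V), b h v = f (Submodule.Quotient.mk v) h := hb_left
  have hb_inj := hb_alt.flip_injective_of_ker_le hb_left hg_surj hg_ker
  refine ⟨b, ⟨hb_alt, fun h h' => by rw [hb_left, hcompat], fun v h => hb_left h v⟩,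
    ⟨hb_inj, (injective_iff_surjective_of_finrank_eq_finrank
      (by rw [finrank_linearMap, hL, mul_one])).mp hb_inj⟩,
    fun w => ⟨fun hw v hv => ?_, fun hw => ?_⟩,
    fun b' ⟨hb'_alt, _, hb'_left⟩ => IsAlt.eq_of_isCoatom hb'_alt hb_alt hH_coatom
      fun h hh => LinearMap.ext fun v => by rw [hb'_left v ⟨h, hh⟩, hb_left ⟨h, hh⟩]⟩
  · rw [hb_left ⟨w, hw⟩, (Submodule.Quotient.mk_eq_zero I).mpr hv, map_zero,
      LinearMap.zero_apply]
  · obtain ⟨i, hi₀⟩ := exists_ne (0 : I)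
    refine hb_alt.mem_of_apply_eq_zero hb_left hg_surj hH_coatom (hIH i.2)
      (by simpa using hi₀) (fun h => ?_) (hw i i.2)
    rw [comp_apply, Submodule.mkQ_apply, hcompat,
      (Submodule.Quotient.mk_eq_zero _).mpr (show _ ∈ I.comap H.subtype from i.2),
      map_zero, LinearMap.zero_apply]

/-- Converse direction of Lemma 3.1 (lin_alg): given subspaces `I ⊆ H ⊆ V`
with `dim I = 1` and `dim H = dim V - 1`, a nondegenerate alternating form
`c` on `H / I` valued in the one-dimensional space `L`, and an isomorphism
`f : V / I → Hom(H, L)` restricting on `H / I` to the adjoint of `c`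
(composed with the pullback `Hom(H/I, L) → Hom(H, L)`), there is a unique
alternating bilinear form `b : V × V → L` restricting to `c` on `H` and whose
partial adjoint `v ↦ b(-, v)|_H` is given by `f`; moreover `b` is
nondegenerate and `I^⊥ = H`. -/
theorem symplectic_extension_unique
    (k : Type*) [Field k]
    (L : Type*) [AddCommGroup L] [Module k L] (hL : Module.finrank k L = 1)
    (V : Type*) [AddCommGroup V] [Module k V] [FiniteDimensional k V]
    (I H : Submodule k V) (hIH : I ≤ H)
    (hI : Module.finrank k I = 1)
    (hH : Module.finrank k H + 1 = Module.finrank k V)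
    (c : (H ⧸ I.comap H.subtype) →ₗ[k] (H ⧸ I.comap H.subtype) →ₗ[k] L)
    (hc_alt : ∀ z, c z z = 0)
    (hc_nd : Function.Bijective c.flip)
    (f : (V ⧸ I) →ₗ[k] (H →ₗ[k] L)) (hf : Function.Bijective f)
    (hcompat : ∀ h h' : H,
      f (Submodule.Quotient.mk (h : V)) h'
        = c (Submodule.Quotient.mk h') (Submodule.Quotient.mk h)) :
    ∃ b : V →ₗ[k] V →ₗ[k] L,
      ((∀ v : V, b v v = 0) ∧
       (∀ h h' : H, b (h : V) (h' : V)
          = c (Submodule.Quotient.mk h) (Submodule.Quotient.mk h')) ∧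
       (∀ (v : V) (h : H), b (h : V) v = f (Submodule.Quotient.mk v) h)) ∧
      Function.Bijective b.flip ∧
      (∀ w : V, w ∈ H ↔ ∀ v ∈ I, b w v = 0) ∧
      (∀ b' : V →ₗ[k] V →ₗ[k] L,
        ((∀ v : V, b' v v = 0) ∧
         (∀ h h' : H, b' (h : V) (h' : V)
            = c (Submodule.Quotient.mk h) (Submodule.Quotient.mk h')) ∧
         (∀ (v : V) (h : H), b' (h : V) v = f (Submodule.Quotient.mk v) h)) →
        b' = b) :=
  symplectic_extension_unique_general k L hL V I H hIH hI hH c hc_alt f hf hcompat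
end

section
/- Let k be a field, V a k-vector space, and H ⊆ V a subspace of codimension at most one (i.e. dim(V/H) ≤ 1). Consider the commutative square of canonical k-linear maps whose top arrow is H ⊗ H → Λ²H (x ⊗ y ↦ x ∧ y), whose left arrow is the inclusion-induced map H ⊗ H → V ⊗ H, whose right arrow is the map Λ²H → Λ²V induced by the inclusion H ⊆ V, and whose bottom arrow is V ⊗ H → Λ²V (v ⊗ y ↦ v ∧ y). Then this square is cocartesian (a pushout) in the category of k-vector spaces; equivalently, the induced map from the pushout (Λ²H ⊕ (V ⊗ H)) / { (x∧y, −x⊗y) : x, y ∈ H } to Λ²V is an isomorphism. -/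
/-!
The bottom arrow `V ⊗ H → Λ²V` alone determines the pushout. It is surjective: if `w ∉ H`
then `V = H + k w`, so `v ∧ w = h ∧ w = -(w ∧ h)` for some `h ∈ H`. And a map
`g₂ : V ⊗ H → W` killing the squares `x ⊗ x` (`x ∈ H`) factors through it: for a retraction
`π : V → H`, the form `v ⊗ w ↦ g₂ (v ⊗ π w) - g₂ ((w - π w) ⊗ π v)` vanishes on each `v ⊗ v`
and restricts to `g₂`. The condition on `Λ²H` then follows since `H ⊗ H → Λ²H` is surjective.
-/

open TensorProduct

/-- The subspace of `W ⊗ W` spanned by the pure squares `x ⊗ x`. -/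
def squaresSubmodule (k W : Type*) [Field k] [AddCommGroup W] [Module k W] :
    Submodule k (W ⊗[k] W) :=
  Submodule.span k {z : W ⊗[k] W | ∃ x : W, z = x ⊗ₜ[k] x}

/-- The second exterior power `Λ²W`, realized as the quotient of `W ⊗ W` by the
subspace spanned by the squares `x ⊗ x`. -/
abbrev ExtSq (k W : Type*) [Field k] [AddCommGroup W] [Module k W] :=
  (W ⊗[k] W) ⧸ squaresSubmodule k W

/-- The canonical map `W ⊗ W → Λ²W`, `x ⊗ y ↦ x ∧ y`. -/
def wedgeMk (k W : Type*) [Field k] [AddCommGroup W] [Module k W] :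
    W ⊗[k] W →ₗ[k] ExtSq k W :=
  (squaresSubmodule k W).mkQ

/-- The map `Λ²H → Λ²V` induced by the inclusion of a subspace `H ⊆ V`. -/
noncomputable def extSqMapOfLE (k V : Type*) [Field k] [AddCommGroup V] [Module k V]
    (H : Submodule k V) : ExtSq k H →ₗ[k] ExtSq k V :=
  Submodule.mapQ (squaresSubmodule k H) (squaresSubmodule k V)
    (TensorProduct.map H.subtype H.subtype)
    (by
      rw [squaresSubmodule, Submodule.span_le]
      rintro z ⟨x, rfl⟩
      simp only [SetLike.mem_coe, Submodule.mem_comap, TensorProduct.map_tmul]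
      exact Submodule.subset_span ⟨H.subtype x, rfl⟩)

section ExtSq

variable {k W : Type*} [Field k] [AddCommGroup W] [Module k W]

theorem wedgeMk_surjective : Function.Surjective (wedgeMk k W) :=
  Submodule.mkQ_surjective _

@[simp]
theorem wedgeMk_tmul_self (x : W) : wedgeMk k W (x ⊗ₜ x) = 0 :=
  (Submodule.Quotient.mk_eq_zero _).mpr (Submodule.subset_span ⟨x, rfl⟩)

theorem wedgeMk_tmul_comm (x y : W) : wedgeMk k W (x ⊗ₜ y) = -wedgeMk k W (y ⊗ₜ x) := by
  refine eq_neg_of_add_eq_zero_right ?_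
  have := wedgeMk_tmul_self (k := k) (x + y)
  simpa only [tmul_add, add_tmul, map_add, wedgeMk_tmul_self, zero_add, add_zero] using this

theorem exists_comp_wedgeMk_eq {M : Type*} [AddCommGroup M] [Module k M]
    (f : W ⊗[k] W →ₗ[k] M) (hf : ∀ x : W, f (x ⊗ₜ x) = 0) :
    ∃ g : ExtSq k W →ₗ[k] M, g ∘ₗ wedgeMk k W = f := by
  refine ⟨(squaresSubmodule k W).liftQ f ?_, Submodule.liftQ_mkQ _ _ _⟩
  rw [squaresSubmodule, Submodule.span_le]
  rintro _ ⟨x, rfl⟩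
  exact hf x

end ExtSq

theorem exists_smul_eq_of_rank_le_one {K M : Type*} [DivisionRing K] [AddCommGroup M]
    [Module K M] (h : Module.rank K M ≤ 1) {x : M} (hx : x ≠ 0) (y : M) :
    ∃ c : K, c • x = y := by
  obtain ⟨v₀, hv₀⟩ := rank_le_one_iff.mp h
  obtain ⟨r, rfl⟩ := hv₀ x
  obtain ⟨s, rfl⟩ := hv₀ y
  have hr : r ≠ 0 := by rintro rfl; exact hx (zero_smul K v₀)
  exact ⟨s * r⁻¹, by rw [smul_smul, inv_mul_cancel_right₀ hr]⟩

section Subspace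

variable {k V : Type*} [Field k] [AddCommGroup V] [Module k V] (H : Submodule k V)

theorem extSqMapOfLE_comp_wedgeMk :
    extSqMapOfLE k V H ∘ₗ wedgeMk k H =
      (wedgeMk k V ∘ₗ map LinearMap.id H.subtype) ∘ₗ map H.subtype LinearMap.id :=
  TensorProduct.ext' fun _ _ => rfl

theorem surjective_wedgeMk_comp_map_subtype (hH : Module.rank k (V ⧸ H) ≤ 1) :
    Function.Surjective (wedgeMk k V ∘ₗ map LinearMap.id H.subtype) := by
  rw [← LinearMap.range_eq_top, eq_top_iff,
    ← LinearMap.range_eq_top.mpr wedgeMk_surjective, LinearMap.range_eq_map,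
    ← span_tmul_eq_top, Submodule.map_span, Submodule.span_le]
  rintro _ ⟨_, ⟨v, w, rfl⟩, rfl⟩
  by_cases hw : w ∈ H
  · exact ⟨v ⊗ₜ ⟨w, hw⟩, rfl⟩
  · have hw' : Submodule.Quotient.mk (p := H) w ≠ 0 := by
      rwa [Ne, Submodule.Quotient.mk_eq_zero]
    obtain ⟨c, hc⟩ := exists_smul_eq_of_rank_le_one hH hw' (Submodule.Quotient.mk v)
    have hmem : v - c • w ∈ H := by
      rw [← Submodule.Quotient.mk_eq_zero, Submodule.Quotient.mk_sub,
        Submodule.Quotient.mk_smul, hc, sub_self]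
    refine ⟨-(w ⊗ₜ ⟨v - c • w, hmem⟩), ?_⟩
    calc wedgeMk k V (map LinearMap.id H.subtype (-(w ⊗ₜ ⟨v - c • w, hmem⟩)))
        = -wedgeMk k V (w ⊗ₜ (v - c • w)) := by simp
      _ = wedgeMk k V ((v - c • w) ⊗ₜ w) := by rw [wedgeMk_tmul_comm, neg_neg]
      _ = wedgeMk k V (v ⊗ₜ w) := by
        rw [sub_tmul, map_sub, ← smul_tmul', map_smul, wedgeMk_tmul_self, smul_zero, sub_zero]

theorem exists_comp_wedgeMk_comp_map_subtype_eq {M : Type*} [AddCommGroup M]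
    [Module k M] (f : V ⊗[k] H →ₗ[k] M) (hf : ∀ x : H, f ((x : V) ⊗ₜ x) = 0) :
    ∃ g : ExtSq k V →ₗ[k] M, g ∘ₗ (wedgeMk k V ∘ₗ map LinearMap.id H.subtype) = f := by
  obtain ⟨π, hπ⟩ := H.subtype.exists_leftInverse_of_injective H.ker_subtype
  have hπ' (x : H) : π x = x := LinearMap.congr_fun hπ x
  let F : V ⊗[k] V →ₗ[k] M := f ∘ₗ map LinearMap.id π -
    f ∘ₗ map (LinearMap.id - H.subtype ∘ₗ π) π ∘ₗ (TensorProduct.comm k V V).toLinearMap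
  have hF (v w : V) : F (v ⊗ₜ w) = f (v ⊗ₜ π w) - f ((w - π w) ⊗ₜ π v) := rfl
  obtain ⟨g, hg⟩ := exists_comp_wedgeMk_eq F fun v => by
    rw [hF, sub_tmul, map_sub, hf, sub_zero, sub_self]
  refine ⟨g, TensorProduct.ext' fun v y => ?_⟩
  rw [← LinearMap.comp_assoc, hg]
  simp [hF, hπ']

end Subspace

/-- For a subspace `H ⊆ V` of codimension at most one, the commutative square
with top arrow `H ⊗ H → Λ²H`, left arrow `H ⊗ H → V ⊗ H`, right arrow
`Λ²H → Λ²V` and bottom arrow `V ⊗ H → Λ²V` (where `V ⊗ H → Λ²V` is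
`v ⊗ y ↦ v ∧ y`) is cocartesian in the category of `k`-vector spaces,
expressed via the universal property of the pushout. -/
theorem extSq_square_is_pushout
    (k V : Type*) [Field k] [AddCommGroup V] [Module k V]
    (H : Submodule k V) (hH : Module.rank k (V ⧸ H) ≤ 1)
    (W : Type*) [AddCommGroup W] [Module k W]
    (g₁ : ExtSq k H →ₗ[k] W) (g₂ : (V ⊗[k] H) →ₗ[k] W)
    (hcomm : g₁ ∘ₗ wedgeMk k H = g₂ ∘ₗ TensorProduct.map H.subtype LinearMap.id) :
    ∃! g : ExtSq k V →ₗ[k] W,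
      g ∘ₗ extSqMapOfLE k V H = g₁ ∧
      g ∘ₗ (wedgeMk k V ∘ₗ TensorProduct.map LinearMap.id H.subtype) = g₂ := by
  have hsq (x : H) : g₂ ((x : V) ⊗ₜ x) = 0 := by
    simpa using (LinearMap.congr_fun hcomm (x ⊗ₜ x)).symm
  obtain ⟨g, hg⟩ := exists_comp_wedgeMk_comp_map_subtype_eq H g₂ hsq
  refine ⟨g, ⟨?_, hg⟩, fun g' ⟨_, hg'⟩ => ?_⟩
  · rw [← LinearMap.cancel_right wedgeMk_surjective, LinearMap.comp_assoc,
      extSqMapOfLE_comp_wedgeMk, ← LinearMap.comp_assoc, hg, hcomm]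
  · exact (LinearMap.cancel_right (surjective_wedgeMk_comp_map_subtype H hH)).mp
      (hg'.trans hg.symm)
end
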